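/- arXiv:2506.03898 — 3 statements merged into one kernel-verified Lean document; each statement's English description precedes it below -/
import Mathlib

section
/- Let H, G, Ḡ be Hilbert spaces, h* ∈ H with ‖h*‖ ≤ S, M : H → G^N bounded, η ∈ G^N, λ > 0, y = Mh* + η, and h_λ = (M*M + λ·id_H)^{-1} M* y. Then for every bounded operator L̄ : H → Ḡ, ‖L̄ h_λ − L̄ h*‖ ≤ ‖L̄ (M*M + λ·id_H)^{-1/2}‖ · ( ‖(M*M + λ·id_H)^{-1/2} M* η‖ + λ^{1/2} S ). -/
open scoped RealInnerProductSpace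

instance pilpCompleteSpace {p : ENNReal} {ι : Type*} {β : ι → Type*} [∀ i, UniformSpace (β i)]
    [∀ i, CompleteSpace (β i)] : CompleteSpace (PiLp p β) :=
  (PiLp.uniformEquiv p β).completeSpace_iff.2 inferInstance

/-!
Write `B = M*M + λ` and `T = B⁻¹ = S²`. Since `T B = 1`, the error of the ridge estimate is
`h_λ - h* = T M* η - λ T h* = S (S M* η - λ S h*)`, so `L̄ (h_λ - h*)` is bounded by
`‖L̄ S‖ (‖S M* η‖ + λ ‖S h*‖)`. The bias term is controlled by coercivity of `B`,
`λ ‖u‖² ≤ ⟪B u, u⟫`, which together with `B T = 1` gives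
`λ ‖S x‖² = λ ⟪T x, x⟫ ≤ λ ‖T x‖ ‖x‖ ≤ ‖x‖²`.
-/

namespace ContinuousLinearMap

variable {H F : Type*} [NormedAddCommGroup H] [InnerProductSpace ℝ H] [CompleteSpace H]
  [NormedAddCommGroup F] [InnerProductSpace ℝ F] [CompleteSpace F]

theorem inner_adjoint_comp_self_add_smul_apply_self (M : H →L[ℝ] F) (lam : ℝ) (u : H) :
    ⟪(adjoint M ∘L M + lam • (1 : H →L[ℝ] H)) u, u⟫ =
      ‖M u‖ ^ 2 + lam * ‖u‖ ^ 2 := by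
  simp only [add_apply, comp_apply, smul_apply, one_apply_eq_self, inner_add_left,
    inner_smul_left, adjoint_inner_left, real_inner_self_eq_norm_sq, RCLike.conj_to_real]

theorem mul_norm_sq_le_inner_adjoint_comp_self_add_smul_apply_self (M : H →L[ℝ] F) (lam : ℝ)
    (u : H) :
    lam * ‖u‖ ^ 2 ≤ ⟪(adjoint M ∘L M + lam • (1 : H →L[ℝ] H)) u, u⟫ := by
  rw [inner_adjoint_comp_self_add_smul_apply_self]
  nlinarith [sq_nonneg ‖M u‖]

theorem sub_eq_of_comp_adjoint_comp_self_add_smul_eq_one (M : H →L[ℝ] F) (lam : ℝ)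
    {T : H →L[ℝ] H} (hT : T ∘L (adjoint M ∘L M + lam • (1 : H →L[ℝ] H)) = 1)
    (h : H) (η : F) :
    T (adjoint M (M h + η)) - h = T (adjoint M η) - lam • T h := by
  have hTh : T (adjoint M (M h)) + lam • T h = h := by
    simpa only [comp_apply, add_apply, smul_apply, one_apply_eq_self, map_add,
      map_smul] using congrArg (fun f => f h) hT
  rw [map_add, map_add]
  linear_combination (norm := abel) hTh

end ContinuousLinearMap

section Coercive

variable {H : Type*} [NormedAddCommGroup H] [InnerProductSpace ℝ H]

theorem mul_norm_apply_le_of_comp_eq_one {B T : H →L[ℝ] H} {c : ℝ}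
    (hB : ∀ u, c * ‖u‖ ^ 2 ≤ ⟪B u, u⟫) (hBT : B ∘L T = 1) (x : H) :
    c * ‖T x‖ ≤ ‖x‖ := by
  have hx : B (T x) = x := by simpa using congrArg (fun f => f x) hBT
  have h : c * ‖T x‖ ^ 2 ≤ ‖x‖ * ‖T x‖ := by
    calc c * ‖T x‖ ^ 2 ≤ ⟪B (T x), T x⟫ := hB (T x)
      _ = ⟪x, T x⟫ := by rw [hx]
      _ ≤ ‖x‖ * ‖T x‖ := real_inner_le_norm x (T x)
  rcases (norm_nonneg (T x)).eq_or_lt with h0 | hpos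
  · rw [← h0, mul_zero]
    exact norm_nonneg x
  · nlinarith

variable [CompleteSpace H]

theorem IsSelfAdjoint.norm_sq_apply_eq_inner_comp_self {S : H →L[ℝ] H} (hS : IsSelfAdjoint S)
    (x : H) : ‖S x‖ ^ 2 = ⟪(S ∘L S) x, x⟫ := by
  rw [ContinuousLinearMap.comp_apply, ← real_inner_self_eq_norm_sq,
    ← ContinuousLinearMap.adjoint_inner_left, hS.adjoint_eq]

theorem IsSelfAdjoint.sqrt_mul_norm_apply_le_of_sq_comp_eq_one {B S : H →L[ℝ] H} {c : ℝ}
    (hc : 0 < c) (hB : ∀ u, c * ‖u‖ ^ 2 ≤ ⟪B u, u⟫) (hS : IsSelfAdjoint S)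
    (hBS : B ∘L (S ∘L S) = 1) (x : H) : Real.sqrt c * ‖S x‖ ≤ ‖x‖ := by
  have hsq : (Real.sqrt c * ‖S x‖) ^ 2 ≤ ‖x‖ ^ 2 := by
    calc (Real.sqrt c * ‖S x‖) ^ 2 = c * ⟪(S ∘L S) x, x⟫ := by
          rw [mul_pow, Real.sq_sqrt hc.le, hS.norm_sq_apply_eq_inner_comp_self]
      _ ≤ c * (‖(S ∘L S) x‖ * ‖x‖) := by gcongr; exact real_inner_le_norm _ _
      _ ≤ ‖x‖ * ‖x‖ := by
          rw [← mul_assoc]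
          gcongr
          exact mul_norm_apply_le_of_comp_eq_one hB hBS x
      _ = ‖x‖ ^ 2 := (sq _).symm
  exact (pow_le_pow_iff_left₀ (by positivity) (norm_nonneg x) two_ne_zero).1 hsq

end Coercive

theorem stmt4_general
    {H G Gbar : Type*}
    [NormedAddCommGroup H] [InnerProductSpace ℝ H] [CompleteSpace H]
    [NormedAddCommGroup G] [InnerProductSpace ℝ G] [CompleteSpace G]
    [NormedAddCommGroup Gbar] [InnerProductSpace ℝ Gbar]
    (N : ℕ)
    (M : H →L[ℝ] PiLp 2 fun _ : Fin N => G)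
    (lam : ℝ) (hlam : 0 < lam)
    (hstar : H) (S : ℝ) (hS : ‖hstar‖ ≤ S)
    (η : PiLp 2 fun _ : Fin N => G)
    (y : PiLp 2 fun _ : Fin N => G) (hy : y = M hstar + η)
    (T : H →L[ℝ] H)
    (hT1 : T ∘L (ContinuousLinearMap.adjoint M ∘L M + lam • (1 : H →L[ℝ] H)) = 1)
    (hT2 : (ContinuousLinearMap.adjoint M ∘L M + lam • (1 : H →L[ℝ] H)) ∘L T = 1)
    (Shalf : H →L[ℝ] H)
    (hShalfSA : IsSelfAdjoint Shalf)
    (hShalfSq : Shalf ∘L Shalf = T)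
    (hlamEst : H) (hEst : hlamEst = T (ContinuousLinearMap.adjoint M y))
    (Lbar : H →L[ℝ] Gbar) :
    ‖Lbar hlamEst - Lbar hstar‖
      ≤ ‖Lbar ∘L Shalf‖ *
        (‖Shalf (ContinuousLinearMap.adjoint M η)‖ + Real.sqrt lam * S) := by
  have hsplit : Lbar hlamEst - Lbar hstar = (Lbar ∘L Shalf)
      (Shalf (ContinuousLinearMap.adjoint M η) - lam • Shalf hstar) := by
    rw [← map_sub, hEst, hy,
      ContinuousLinearMap.sub_eq_of_comp_adjoint_comp_self_add_smul_eq_one M lam hT1, ← hShalfSq]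
    simp only [ContinuousLinearMap.comp_apply, map_sub, map_smul]
  have hbias : ‖lam • Shalf hstar‖ ≤ Real.sqrt lam * S := by
    have h := hShalfSA.sqrt_mul_norm_apply_le_of_sq_comp_eq_one hlam
      (ContinuousLinearMap.mul_norm_sq_le_inner_adjoint_comp_self_add_smul_apply_self M lam)
      (hShalfSq ▸ hT2) hstar
    calc ‖lam • Shalf hstar‖ = Real.sqrt lam * (Real.sqrt lam * ‖Shalf hstar‖) := by
          rw [norm_smul, Real.norm_of_nonneg hlam.le, ← mul_assoc, Real.mul_self_sqrt hlam.le]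
      _ ≤ Real.sqrt lam * S := by gcongr; exact h.trans hS
  rw [hsplit]
  exact ((Lbar ∘L Shalf).le_opNorm _).trans <|
    mul_le_mul_of_nonneg_left (norm_sub_le_of_le le_rfl hbias) (norm_nonneg _)

/-- With `‖h*‖ ≤ S`, `y = M h* + η`, and
`h_λ = (M*M + λ·id)⁻¹ M* y`, for every bounded `L̄ : H → Ḡ`:
`‖L̄ h_λ − L̄ h*‖ ≤ ‖L̄ (M*M + λ·id)^{-1/2}‖ · (‖(M*M + λ·id)^{-1/2} M* η‖ + √λ · S)`.
Here `T = (M*M + λ·id)⁻¹` and `Shalf = (M*M + λ·id)^{-1/2}` are encoded by their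
defining algebraic properties. -/
theorem stmt4
    {H G Gbar : Type*}
    [NormedAddCommGroup H] [InnerProductSpace ℝ H] [CompleteSpace H]
    [NormedAddCommGroup G] [InnerProductSpace ℝ G] [CompleteSpace G]
    [NormedAddCommGroup Gbar] [InnerProductSpace ℝ Gbar] [CompleteSpace Gbar]
    (N : ℕ)
    (M : H →L[ℝ] PiLp 2 fun _ : Fin N => G)
    (lam : ℝ) (hlam : 0 < lam)
    (hstar : H) (S : ℝ) (hS : ‖hstar‖ ≤ S)
    (η : PiLp 2 fun _ : Fin N => G)
    (y : PiLp 2 fun _ : Fin N => G) (hy : y = M hstar + η)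
    (T : H →L[ℝ] H)
    (hT1 : T ∘L (ContinuousLinearMap.adjoint M ∘L M + lam • (1 : H →L[ℝ] H)) = 1)
    (hT2 : (ContinuousLinearMap.adjoint M ∘L M + lam • (1 : H →L[ℝ] H)) ∘L T = 1)
    (Shalf : H →L[ℝ] H)
    (hShalfSA : IsSelfAdjoint Shalf)
    (hShalfPos : ∀ x : H, 0 ≤ ⟪Shalf x, x⟫)
    (hShalfSq : Shalf ∘L Shalf = T)
    (hlamEst : H) (hEst : hlamEst = T (ContinuousLinearMap.adjoint M y))
    (Lbar : H →L[ℝ] Gbar) :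
    ‖Lbar hlamEst - Lbar hstar‖
      ≤ ‖Lbar ∘L Shalf‖ *
        (‖Shalf (ContinuousLinearMap.adjoint M η)‖ + Real.sqrt lam * S) :=
  stmt4_general N M lam hlam hstar S hS η y hy T hT1 hT2 Shalf hShalfSA hShalfSq hlamEst hEst Lbar
end

section
/- Let G be a separable Hilbert space, R : G → G a bounded, self-adjoint, positive semi-definite operator, and η a G-valued random variable with mean zero that is R-subgaussian, i.e., E[exp⟨g, η⟩] ≤ exp(½⟨Rg, g⟩) for all g ∈ G. Then η takes values in the closure of the range of R almost surely. -/
open scoped RealInnerProductSpace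
open MeasureTheory ProbabilityTheory Filter

/-!
If `e` is orthogonal to the range of `R`, then `⟪R (t • e), t • e⟫ = 0`, so the subgaussian bound
says that the moment generating function of `⟪e, η⟫` is at most `1` everywhere; by Chernoff's
bound on both tails, `⟪e, η⟫ = 0` almost surely. Running over a countable dense subset of
`(range R)ᗮ` gives `η ∈ (range R)ᗮᗮ = closure (range R)` almost surely.
-/

section MGF

variable {Ω : Type*} [MeasurableSpace Ω] {μ : Measure Ω} [IsFiniteMeasure μ] {X : Ω → ℝ}

lemma measureReal_setOf_le_eq_zero_of_mgf_le_one
    (hint : ∀ t, Integrable (fun ω => Real.exp (t * X ω)) μ) (hmgf : ∀ t, 0 < t → mgf X μ t ≤ 1)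
    {ε : ℝ} (hε : 0 < ε) : μ.real {ω | ε ≤ X ω} = 0 := by
  have hchernoff : ∀ t, 0 < t → μ.real {ω | ε ≤ X ω} ≤ Real.exp (-t * ε) := fun t ht =>
    calc μ.real {ω | ε ≤ X ω} ≤ Real.exp (-t * ε) * mgf X μ t :=
          measure_ge_le_exp_mul_mgf ε ht.le (hint t)
      _ ≤ Real.exp (-t * ε) := mul_le_of_le_one_right (Real.exp_pos _).le (hmgf t ht)
  have htendsto : Tendsto (fun t => Real.exp (-t * ε)) atTop (nhds 0) := by
    refine (Real.tendsto_exp_neg_atTop_nhds_zero.comp (tendsto_id.atTop_mul_const hε)).congr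
      fun t => ?_
    simp only [Function.comp_apply, id, neg_mul]
  exact le_antisymm (ge_of_tendsto htendsto ((eventually_gt_atTop 0).mono hchernoff))
    measureReal_nonneg

lemma ae_nonpos_of_mgf_le_one
    (hint : ∀ t, Integrable (fun ω => Real.exp (t * X ω)) μ) (hmgf : ∀ t, 0 < t → mgf X μ t ≤ 1) :
    ∀ᵐ ω ∂μ, X ω ≤ 0 := by
  have hlt : ∀ n : ℕ, ∀ᵐ ω ∂μ, X ω < 1 / (n + 1) := fun n => by
    have hnull :=
      measureReal_setOf_le_eq_zero_of_mgf_le_one hint hmgf (ε := 1 / (n + 1)) (by positivity)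
    rw [measureReal_eq_zero_iff] at hnull
    simpa only [Set.mem_ofPred_eq, not_le] using measure_eq_zero_iff_ae_notMem.mp hnull
  filter_upwards [ae_all_iff.mpr hlt] with ω hω
  by_contra! hpos
  obtain ⟨n, hn⟩ := exists_nat_one_div_lt hpos
  exact (hω n).not_gt hn

lemma ae_eq_zero_of_mgf_le_one
    (hint : ∀ t, Integrable (fun ω => Real.exp (t * X ω)) μ) (hmgf : ∀ t, mgf X μ t ≤ 1) :
    ∀ᵐ ω ∂μ, X ω = 0 := by
  have hint_neg : ∀ t, Integrable (fun ω => Real.exp (t * (-X) ω)) μ := fun t => by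
    simpa only [Pi.neg_apply, mul_neg, neg_mul] using hint (-t)
  have hneg : ∀ᵐ ω ∂μ, (-X) ω ≤ 0 :=
    ae_nonpos_of_mgf_le_one hint_neg fun t _ => by simpa only [mgf_neg] using hmgf (-t)
  filter_upwards [ae_nonpos_of_mgf_le_one hint fun t _ => hmgf t, hneg] with ω hle hge
  exact le_antisymm hle (neg_nonpos.mp hge)

end MGF

lemma ae_forall_inner_eq_zero_of_isSeparable {𝕜 E Ω : Type*} [RCLike 𝕜] [NormedAddCommGroup E]
    [InnerProductSpace 𝕜 E] [MeasurableSpace Ω] {μ : Measure Ω} {η : Ω → E} {S : Set E}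
    (hS : TopologicalSpace.IsSeparable S) (h : ∀ e ∈ S, ∀ᵐ ω ∂μ, inner 𝕜 e (η ω) = 0) :
    ∀ᵐ ω ∂μ, ∀ e ∈ S, inner 𝕜 e (η ω) = 0 := by
  obtain ⟨D, hDS, hDc, hSD⟩ := hS.exists_countable_dense_subset
  filter_upwards [(ae_ball_iff hDc).mpr fun e he => h e (hDS he)] with ω hω e he
  have hclosed : IsClosed {e : E | inner 𝕜 e (η ω) = 0} :=
    isClosed_eq (continuous_id.inner continuous_const) continuous_const
  exact hclosed.closure_subset_iff.mpr hω (hSD he)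

theorem stmt5_general
    {G : Type*} [NormedAddCommGroup G] [InnerProductSpace ℝ G] [CompleteSpace G]
    [SecondCountableTopology G]
    {Ω : Type*} [MeasurableSpace Ω] (μ : Measure Ω) [IsProbabilityMeasure μ]
    (R : G →L[ℝ] G)
    (η : Ω → G)
    (hintexp : ∀ g : G, Integrable (fun ω => Real.exp ⟪g, η ω⟫) μ)
    (hsub : ∀ g : G, ∫ ω, Real.exp ⟪g, η ω⟫ ∂μ ≤ Real.exp (⟪R g, g⟫ / 2)) :
    ∀ᵐ ω ∂μ, η ω ∈ closure (Set.range R) := by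
  set K : Submodule ℝ G := LinearMap.range (R : G →ₗ[ℝ] G)
  have hinner_zero : ∀ e ∈ Kᗮ, ∀ᵐ ω ∂μ, ⟪e, η ω⟫ = 0 := by
    intro e he
    have hint : ∀ t : ℝ, Integrable (fun ω => Real.exp (t * ⟪e, η ω⟫)) μ := fun t => by
      simpa only [real_inner_smul_left] using hintexp (t • e)
    refine ae_eq_zero_of_mgf_le_one hint fun t => ?_
    have hRe : ⟪R (t • e), t • e⟫ = 0 :=
      Submodule.inner_right_of_mem_orthogonal (LinearMap.mem_range_self _ _) (Kᗮ.smul_mem t he)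
    simpa only [mgf, hRe, zero_div, Real.exp_zero, real_inner_smul_left] using hsub (t • e)
  have hsep : TopologicalSpace.IsSeparable (Kᗮ : Set G) := .of_separableSpace _
  filter_upwards [ae_forall_inner_eq_zero_of_isSeparable hsep hinner_zero] with ω hω
  have hmem : η ω ∈ Kᗮᗮ := (Submodule.mem_orthogonal _ _).mpr hω
  rwa [Submodule.orthogonal_orthogonal_eq_closure] at hmem

/-- A mean-zero `R`-subgaussian random variable with values in a separable
Hilbert space `G` (with `R` bounded, self-adjoint, positive semi-definite) takes values in
the closure of the range of `R` almost surely. -/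
theorem stmt5
    {G : Type*} [NormedAddCommGroup G] [InnerProductSpace ℝ G] [CompleteSpace G]
    [SecondCountableTopology G] [MeasurableSpace G] [BorelSpace G]
    {Ω : Type*} [MeasurableSpace Ω] (μ : Measure Ω) [IsProbabilityMeasure μ]
    (R : G →L[ℝ] G) (hRsa : IsSelfAdjoint R) (hRpos : ∀ g : G, 0 ≤ ⟪R g, g⟫)
    (η : Ω → G) (hmeas : Measurable η)
    (hint : Integrable η μ) (hmean : ∫ ω, η ω ∂μ = 0)
    (hintexp : ∀ g : G, Integrable (fun ω => Real.exp ⟪g, η ω⟫) μ)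
    (hsub : ∀ g : G, ∫ ω, Real.exp ⟪g, η ω⟫ ∂μ ≤ Real.exp (⟪R g, g⟫ / 2)) :
    ∀ᵐ ω ∂μ, η ω ∈ closure (Set.range R) :=
  stmt5_general μ R η hintexp hsub
end

section
/- Let H be a separable Hilbert space, V : H → H self-adjoint and positive definite with V = ∑_m λ_m b_m ⊗ b_m for an orthonormal basis (b_m) and λ_m > 0, and with V^{-1} bounded. Let M : H → G be a bounded operator into a Hilbert space G with M M* trace-class. Define the truncations W_M = ∑_{m=1}^{M} λ_m^{-1} b_m ⊗ b_m. Then M W_M M* converges to M V^{-1} M* in the trace norm as M → ∞. -/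
open scoped RealInnerProductSpace
open Filter

/-!
With `uₘ = M bₘ` and `wₘ = λₘ⁻¹`, both `M V⁻¹ M*` and `M W_N M*` are sums of the positive rank-one
operators `wₘ uₘ ⊗ uₘ`, over all `m` and over `m < N` respectively. Their difference is the tail
sum over `m ≥ N`, whose trace in any Hilbert basis is `∑_{m ≥ N} wₘ ‖uₘ‖²` by Parseval and
Tonelli for nonnegative double series. This tail tends to `0` because `wₘ ≤ C` and
`∑ₘ ‖uₘ‖² < ∞`.
-/

section RankOneSum

variable {ι κ G : Type*} [NormedAddCommGroup G] [InnerProductSpace ℝ G]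

noncomputable def rankOneSum (w : ι → ℝ) (u : ι → G) (x : G) : G :=
  ∑' m, (w m * ⟪u m, x⟫) • u m

variable {w : ι → ℝ} {u : ι → G}

lemma summable_smul_inner_smul [CompleteSpace G] (hw : Summable fun m => |w m| * ‖u m‖ ^ 2)
    (x : G) :
    Summable fun m => (w m * ⟪u m, x⟫) • u m := by
  refine .of_norm <| .of_nonneg_of_le (fun _ => norm_nonneg _) (fun m => ?_) (hw.mul_right ‖x‖)
  calc ‖(w m * ⟪u m, x⟫) • u m‖ = |w m| * |⟪u m, x⟫| * ‖u m‖ := by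
        rw [norm_smul, Real.norm_eq_abs, abs_mul]
    _ ≤ |w m| * (‖u m‖ * ‖x‖) * ‖u m‖ := by
        gcongr; exact abs_real_inner_le_norm _ _
    _ = |w m| * ‖u m‖ ^ 2 * ‖x‖ := by ring

lemma hasSum_inner_rankOneSum_self [CompleteSpace G] (hw : Summable fun m => |w m| * ‖u m‖ ^ 2)
    (x : G) :
    HasSum (fun m => w m * ⟪u m, x⟫ ^ 2) ⟪rankOneSum w u x, x⟫ := by
  have h := (summable_smul_inner_smul hw x).hasSum.mapL (innerSL ℝ x)
  simpa only [innerSL_apply_apply, real_inner_smul_right, ← real_inner_comm x,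
    real_inner_smul_left, mul_assoc, ← sq, rankOneSum] using h

lemma hasSum_tsum_inner_sq_basis (hw0 : ∀ m, 0 ≤ w m) (hw : Summable fun m => w m * ‖u m‖ ^ 2)
    (e : HilbertBasis κ ℝ G) :
    HasSum (fun n => ∑' m, w m * ⟪u m, e n⟫ ^ 2) (∑' m, w m * ‖u m‖ ^ 2) := by
  set f : ι × κ → ℝ := fun p => w p.1 * ⟪u p.1, e p.2⟫ ^ 2
  have hf0 : 0 ≤ f := fun p => mul_nonneg (hw0 p.1) (sq_nonneg _)
  have parseval : ∀ m, HasSum (fun n => f (m, n)) (w m * ‖u m‖ ^ 2) := fun m => by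
    have := (e.hasSum_inner_mul_inner (u m) (u m)).mul_left (w m)
    simpa only [f, real_inner_comm (e _), ← sq, real_inner_self_eq_norm_sq] using this
  have hf : Summable f := (summable_prod_of_nonneg hf0).2
    ⟨fun m => (parseval m).summable, by simpa only [fun m => (parseval m).tsum_eq] using hw⟩
  have total : HasSum f (∑' m, w m * ‖u m‖ ^ 2) :=
    hf.hasSum_iff.2 <| (hf.tsum_prod' fun m => (parseval m).summable).trans <|
      tsum_congr fun m => (parseval m).tsum_eq
  exact ((Equiv.prodComm κ ι).hasSum_iff.2 total).prod_fiberwise fun n =>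
    (hf.prod_symm.prod_factor n).hasSum

lemma hasSum_inner_rankOneSum_basis [CompleteSpace G] (hw0 : ∀ m, 0 ≤ w m)
    (hw : Summable fun m => w m * ‖u m‖ ^ 2) (e : HilbertBasis κ ℝ G) :
    HasSum (fun n => ⟪rankOneSum w u (e n), e n⟫) (∑' m, w m * ‖u m‖ ^ 2) := by
  have hw' : Summable fun m => |w m| * ‖u m‖ ^ 2 := by simpa only [abs_of_nonneg (hw0 _)] using hw
  simpa only [fun n => (hasSum_inner_rankOneSum_self hw' (e n)).tsum_eq]
    using hasSum_tsum_inner_sq_basis hw0 hw e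

lemma rankOneSum_sub_sum_range [CompleteSpace G] {w : ℕ → ℝ} {u : ℕ → G}
    (hw : Summable fun m => |w m| * ‖u m‖ ^ 2) (N : ℕ) (x : G) :
    rankOneSum w u x - ∑ m ∈ Finset.range N, (w m * ⟪u m, x⟫) • u m =
      rankOneSum (fun k => w (k + N)) (fun k => u (k + N)) x := by
  rw [rankOneSum, ← (summable_smul_inner_smul hw x).sum_add_tsum_nat_add N, add_sub_cancel_left,
    rankOneSum]

end RankOneSum

/-- Since `A - Wop N` is positive, its trace norm is the trace `∑ₙ ⟪(A - Wop N) eₙ, eₙ⟫`. -/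
theorem stmt14_general
    {H G : Type*}
    [NormedAddCommGroup H] [InnerProductSpace ℝ H] [CompleteSpace H]
    [NormedAddCommGroup G] [InnerProductSpace ℝ G] [CompleteSpace G]
    (b : HilbertBasis ℕ ℝ H) (e : HilbertBasis ℕ ℝ G)
    (lam : ℕ → ℝ) (hlam : ∀ m, 0 < lam m)
    (C : ℝ) (hC : ∀ m, (lam m)⁻¹ ≤ C)
    (M : H →L[ℝ] G)
    (htrace : Summable fun m => ‖M (b m)‖ ^ 2)
    (A : G →L[ℝ] G)
    (hA : ∀ g : G, A g = ∑' m, ((lam m)⁻¹ * ⟪M (b m), g⟫) • M (b m))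
    (Wop : ℕ → G →L[ℝ] G)
    (hW : ∀ (N : ℕ) (g : G),
      Wop N g = ∑ m ∈ Finset.range N, ((lam m)⁻¹ * ⟪M (b m), g⟫) • M (b m)) :
    Tendsto (fun N => ∑' n, ⟪A (e n) - Wop N (e n), e n⟫) atTop (nhds 0) := by
  set w : ℕ → ℝ := fun m => (lam m)⁻¹
  set u : ℕ → G := fun m => M (b m)
  have hw0 : ∀ m, 0 ≤ w m := fun m => (inv_pos.2 (hlam m)).le
  have hw : Summable fun m => w m * ‖u m‖ ^ 2 :=
    .of_nonneg_of_le (fun m => mul_nonneg (hw0 m) (sq_nonneg _))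
      (fun m => mul_le_mul_of_nonneg_right (hC m) (sq_nonneg _)) (htrace.mul_left C)
  have hw' : Summable fun m => |w m| * ‖u m‖ ^ 2 := by simpa only [abs_of_nonneg (hw0 _)] using hw
  have tail : ∀ N x, A x - Wop N x = rankOneSum (fun k => w (k + N)) (fun k => u (k + N)) x :=
    fun N x => by rw [hA, hW]; exact rankOneSum_sub_sum_range hw' N x
  have trace_tail :
      ∀ N, ∑' n, ⟪A (e n) - Wop N (e n), e n⟫ = ∑' k, w (k + N) * ‖u (k + N)‖ ^ 2 := fun N => by
      have hwN : Summable fun k => w (k + N) * ‖u (k + N)‖ ^ 2 := (summable_nat_add_iff N).2 hw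
      simp only [tail]
      exact (hasSum_inner_rankOneSum_basis (fun k => hw0 (k + N)) hwN e).tsum_eq
  exact (tendsto_sum_nat_add fun m => w m * ‖u m‖ ^ 2).congr fun N => (trace_tail N).symm

/-- Let `V = ∑ₘ λₘ bₘ ⊗ bₘ` be self-adjoint positive definite with
bounded inverse (i.e. `λₘ⁻¹ ≤ C`), and `M : H → G` bounded with `M M*` trace-class
(equivalently, `∑ₘ ‖M bₘ‖² < ∞`). Let `Wop N = M W_N M*` where
`W_N = ∑_{m<N} λₘ⁻¹ bₘ ⊗ bₘ` is the truncation, and `A = M V⁻¹ M*`. Then `M W_N M*`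
converges to `M V⁻¹ M*` in the trace norm as `N → ∞`; since the difference
`A − Wop N ≥ 0` is positive, trace-norm convergence means
`tr(A − Wop N) = ∑ₙ ⟨(A − Wop N) eₙ, eₙ⟩ → 0` for a Hilbert basis `(eₙ)` of `G`. -/
theorem stmt14
    {H G : Type*}
    [NormedAddCommGroup H] [InnerProductSpace ℝ H] [CompleteSpace H]
    [NormedAddCommGroup G] [InnerProductSpace ℝ G] [CompleteSpace G]
    (b : HilbertBasis ℕ ℝ H) (e : HilbertBasis ℕ ℝ G)
    (lam : ℕ → ℝ) (hlam : ∀ m, 0 < lam m)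
    (C : ℝ) (hC : ∀ m, (lam m)⁻¹ ≤ C)
    (M : H →L[ℝ] G)
    (V : H →L[ℝ] H)
    (hV : ∀ h : H, V h = ∑' m, (lam m * ⟪b m, h⟫) • b m)
    (htrace : Summable fun m => ‖M (b m)‖ ^ 2)
    (A : G →L[ℝ] G)
    (hA : ∀ g : G, A g = ∑' m, ((lam m)⁻¹ * ⟪M (b m), g⟫) • M (b m))
    (Wop : ℕ → G →L[ℝ] G)
    (hW : ∀ (N : ℕ) (g : G),
      Wop N g = ∑ m ∈ Finset.range N, ((lam m)⁻¹ * ⟪M (b m), g⟫) • M (b m)) :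
    Tendsto (fun N => ∑' n, ⟪A (e n) - Wop N (e n), e n⟫) atTop (nhds 0) :=
  stmt14_general b e lam hlam C hC M htrace A hA Wop hW
end
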